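/- Let Ω be a finite probability space, P a probability measure with full support, and Y_x, Y_{x'} : Ω → ℕ. Then the following are equivalent: (1) Y_x(ω) ≥ Y_{x'}(ω) for all ω ∈ Ω; (2) for all h < l, P(Y_x = h ∧ Y_{x'} = l) = 0; (3) for every event E with P(E) > 0 and every y, P(Y_x ≥ y ∣ E) ≥ P(Y_{x'} ≥ y ∣ E). -/

import Mathlib

open scoped Classical in
/-- Probability of an event `A` under a (finitely supported) measure given by weights `P`. -/
noncomputable def Pr {Ω : Type*} [Fintype Ω] (P : Ω → ℝ) (A : Set Ω) : ℝ :=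
  ∑ ω, if ω ∈ A then P ω else 0

/-!
Under full support an event is null exactly when it is empty, which turns the crossing
condition into pointwise ordering. Conditioning on a singleton `{ω}` turns the conditional
probabilities into the indicators of `y ≤ Y ω` and `y ≤ Y' ω`, so the choice `y = Y' ω`
recovers `Y' ω ≤ Y ω`.
-/

section

variable {Ω : Type*} [Fintype Ω] {P : Ω → ℝ}

lemma Pr_eq_sum_indicator (P : Ω → ℝ) (A : Set Ω) : Pr P A = ∑ ω, A.indicator P ω := by
  unfold Pr Set.indicator
  congr

lemma Pr_mono (hP : ∀ ω, 0 ≤ P ω) {A B : Set Ω} (hAB : A ⊆ B) : Pr P A ≤ Pr P B := by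
  simp only [Pr_eq_sum_indicator]
  exact Finset.sum_le_sum fun ω _ => Set.indicator_le_indicator_of_subset hAB hP ω

lemma Pr_eq_zero_iff (hP : ∀ ω, 0 < P ω) {A : Set Ω} : Pr P A = 0 ↔ A = ∅ := by
  rw [Pr_eq_sum_indicator, Finset.sum_eq_zero_iff_of_nonneg
    fun ω _ => Set.indicator_nonneg (fun ω _ => (hP ω).le) ω]
  simp [Set.indicator_apply_eq_zero, (hP _).ne', Set.eq_empty_iff_forall_notMem]

lemma Pr_inter_singleton (P : Ω → ℝ) (A : Set Ω) (ω : Ω) :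
    Pr P (A ∩ {ω}) = A.indicator P ω := by
  rw [Pr_eq_sum_indicator, Finset.sum_eq_single ω]
  · by_cases hω : ω ∈ A <;> simp [hω]
  · intro b _ hb
    simp [hb]
  · simp

lemma Pr_singleton (P : Ω → ℝ) (ω : Ω) : Pr P {ω} = P ω := by
  simpa using Pr_inter_singleton P Set.univ ω

lemma Pr_inter_singleton_div_Pr_singleton {ω : Ω} (hω : P ω ≠ 0) (A : Set Ω) :
    Pr P (A ∩ {ω}) / Pr P {ω} = A.indicator 1 ω := by
  classical
  rw [Pr_inter_singleton, Pr_singleton, Set.indicator_apply, Set.indicator_apply]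
  split_ifs <;> simp [hω]

variable {α : Type*} [LinearOrder α]

theorem forall_le_iff_forall_Pr_crossing_eq_zero (hP : ∀ ω, 0 < P ω) (Y Y' : Ω → α) :
    (∀ ω, Y' ω ≤ Y ω) ↔ ∀ h l : α, h < l → Pr P {ω | Y ω = h ∧ Y' ω = l} = 0 := by
  simp only [Pr_eq_zero_iff hP, Set.eq_empty_iff_forall_notMem, Set.mem_ofPred_eq, not_and]
  refine ⟨fun hle h l hhl ω hh hl => ?_, fun H ω => ?_⟩
  · subst hh hl
    exact (hle ω).not_gt hhl
  · by_contra hlt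
    exact H _ _ (not_le.1 hlt) ω rfl rfl

theorem forall_le_iff_forall_condPr_le (hP : ∀ ω, 0 < P ω) (Y Y' : Ω → α) :
    (∀ ω, Y' ω ≤ Y ω) ↔ ∀ (E : Set Ω) (y : α), Pr P E > 0 →
      Pr P ({ω | y ≤ Y ω} ∩ E) / Pr P E ≥ Pr P ({ω | y ≤ Y' ω} ∩ E) / Pr P E := by
  refine ⟨fun hle E y hE => ?_, fun H ω => ?_⟩
  · refine div_le_div_of_nonneg_right (Pr_mono (fun ω => (hP ω).le) ?_) hE.le
    exact fun ω ⟨hy, hω⟩ => ⟨hy.trans (hle ω), hω⟩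
  · have hcond := H {ω} (Y' ω) (by rw [Pr_singleton]; exact hP ω)
    rw [ge_iff_le, Pr_inter_singleton_div_Pr_singleton (hP ω).ne',
      Pr_inter_singleton_div_Pr_singleton (hP ω).ne',
      Set.indicator_of_mem (s := {ω' | Y' ω ≤ Y' ω'}) le_rfl] at hcond
    by_contra hlt
    rw [Set.indicator_of_notMem (s := {ω' | Y' ω ≤ Y ω'}) hlt, Pi.one_apply] at hcond
    exact not_le.2 zero_lt_one hcond

end

theorem stmt_13_general {Ω : Type*} [Fintype Ω] (P : Ω → ℝ)
    (hfull : ∀ ω, 0 < P ω) (Yx Yx' : Ω → ℕ) :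
    ((∀ ω, Yx' ω ≤ Yx ω) ↔
        (∀ h l : ℕ, h < l → Pr P {ω | Yx ω = h ∧ Yx' ω = l} = 0)) ∧
      ((∀ ω, Yx' ω ≤ Yx ω) ↔
        (∀ (E : Set Ω) (y : ℕ), Pr P E > 0 →
          Pr P ({ω | y ≤ Yx ω} ∩ E) / Pr P E ≥
            Pr P ({ω | y ≤ Yx' ω} ∩ E) / Pr P E)) :=
  ⟨forall_le_iff_forall_Pr_crossing_eq_zero hfull Yx Yx',
    forall_le_iff_forall_condPr_le hfull Yx Yx'⟩

theorem stmt_13 {Ω : Type*} [Fintype Ω] (P : Ω → ℝ)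
    (hP : ∀ ω, 0 ≤ P ω) (hPsum : ∑ ω, P ω = 1)
    (hfull : ∀ ω, 0 < P ω) (Yx Yx' : Ω → ℕ) :
    ((∀ ω, Yx' ω ≤ Yx ω) ↔
        (∀ h l : ℕ, h < l → Pr P {ω | Yx ω = h ∧ Yx' ω = l} = 0)) ∧
      ((∀ ω, Yx' ω ≤ Yx ω) ↔
        (∀ (E : Set Ω) (y : ℕ), Pr P E > 0 →
          Pr P ({ω | y ≤ Yx ω} ∩ E) / Pr P E ≥
            Pr P ({ω | y ≤ Yx' ω} ∩ E) / Pr P E)) :=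
  stmt_13_general P hfull Yx Yx'
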